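/- The TNNIL-algorithm preserves theorems of iGL and of iK4: for every modal proposition B, if iGL ⊢ B then iGL ⊢ B⁺, and if iK4 ⊢ B then iK4 ⊢ B⁺. -/

import Mathlib

namespace PLHA

/-! ## Modal propositional language -/

/-- Modal propositional formulas: atomic variables, ⊥, ∧, ∨, →, □. -/
inductive Form : Type
  | var : ℕ → Form
  | bot : Form
  | and : Form → Form → Form
  | or  : Form → Form → Form
  | imp : Form → Form → Form
  | box : Form → Form
  deriving DecidableEq

namespace Form

/-- ⊤ -/
def top : Form := imp bot bot

/-- A ↔ B -/
def iffF (A B : Form) : Form := and (imp A B) (imp B A)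

/-- ⊡A := A ∧ □A -/
def boxdot (A : Form) : Form := and A (box A)

/-- `A ∈ NOI`: every occurrence of → is in the scope of some □. -/
def noi : Form → Bool
  | var _ => true
  | bot => true
  | and A B => noi A && noi B
  | or A B => noi A && noi B
  | imp _ _ => false
  | box _ => true

/-- The Leivant translation `A^l`. -/
def lev : Form → Form
  | var n => var n
  | bot => bot
  | and A B => and (lev A) (lev B)
  | or A B => or (boxdot (lev A)) (boxdot (lev B))
  | imp A B => if noi A then imp A (lev B) else imp A B
  | box A => box A

/-- atomic propositions: atomic variables and ⊥. -/
def isAtom (A : Form) : Prop := (∃ n, A = var n) ∨ A = bot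

/-- boxed propositions. -/
def isBoxed (A : Form) : Prop := ∃ B, A = box B

/-- non-modal (□-free) propositions. -/
def boxFree : Form → Bool
  | var _ => true
  | bot => true
  | and A B => boxFree A && boxFree B
  | or A B => boxFree A && boxFree B
  | imp A B => boxFree A && boxFree B
  | box _ => false

/-- A bound on the indices of the variables occurring in a formula. -/
def fvb : Form → ℕ
  | var n => n + 1
  | bot => 0
  | and A B => max (fvb A) (fvb B)
  | or A B => max (fvb A) (fvb B)
  | imp A B => max (fvb A) (fvb B)
  | box A => fvb A

/-- maximal nesting depth of boxes. -/
def bdep : Form → ℕ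
  | var _ => 0
  | bot => 0
  | and A B => max (bdep A) (bdep B)
  | or A B => max (bdep A) (bdep B)
  | imp A B => max (bdep A) (bdep B)
  | box A => bdep A + 1

/-- the complexity measure ρ used to define NNIL. -/
def rho : Form → ℕ
  | var _ => 0
  | bot => 0
  | and A B => max (rho A) (rho B)
  | or A B => max (rho A) (rho B)
  | imp A B => max (rho A + 1) (rho B)
  | box _ => 0

end Form

/-- NNIL: no nested implications to the left. -/
def NNILc (A : Form) : Prop := Form.rho A ≤ 1

/-- TNNIL: thoroughly NNIL propositions. -/
inductive TNNIL : Form → Prop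
  | var (n : ℕ) : TNNIL (.var n)
  | bot : TNNIL .bot
  | and {A B} : TNNIL A → TNNIL B → TNNIL (.and A B)
  | or {A B} : TNNIL A → TNNIL B → TNNIL (.or A B)
  | box {A} : TNNIL A → TNNIL (.box A)
  | imp {A B} : A.noi = true → TNNIL A → TNNIL B → TNNIL (.imp A B)

/-- TNNIL⁻: propositions of the form B(□C₁,…,□Cₙ) with B non-modal and Cᵢ ∈ TNNIL. -/
inductive TNNILminus : Form → Prop
  | var (n : ℕ) : TNNILminus (.var n)
  | bot : TNNILminus .bot
  | box {A} : TNNIL A → TNNILminus (.box A)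
  | and {A B} : TNNILminus A → TNNILminus B → TNNILminus (.and A B)
  | or {A B} : TNNILminus A → TNNILminus B → TNNILminus (.or A B)
  | imp {A B} : TNNILminus A → TNNILminus B → TNNILminus (.imp A B)

/-! ## Proof systems -/

/-- Hilbert-style axioms of intuitionistic propositional logic (over the modal language). -/
inductive IpcAx : Form → Prop
  | a1 (A B) : IpcAx (.imp A (.imp B A))
  | a2 (A B C) : IpcAx (.imp (.imp A (.imp B C)) (.imp (.imp A B) (.imp A C)))
  | a3 (A B) : IpcAx (.imp A (.imp B (.and A B)))
  | a4 (A B) : IpcAx (.imp (.and A B) A)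
  | a5 (A B) : IpcAx (.imp (.and A B) B)
  | a6 (A B) : IpcAx (.imp A (.or A B))
  | a7 (A B) : IpcAx (.imp B (.or A B))
  | a8 (A B C) : IpcAx (.imp (.imp A C) (.imp (.imp B C) (.imp (.or A B) C)))
  | a9 (A) : IpcAx (.imp .bot A)

/-- Derivability from IPC axioms together with extra axioms `Ax`, modus ponens,
and (if `useNec = true`) the necessitation rule. -/
inductive Proves (Ax : Form → Prop) (useNec : Bool) : Form → Prop
  | ax {A} : Ax A → Proves Ax useNec A
  | ipc {A} : IpcAx A → Proves Ax useNec A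
  | mp {A B} : Proves Ax useNec (.imp A B) → Proves Ax useNec A → Proves Ax useNec B
  | nec {A} : useNec = true → Proves Ax useNec A → Proves Ax useNec (.box A)

/-- K and 4 axiom schemas. -/
inductive K4Ax : Form → Prop
  | k (A B) : K4Ax (.imp (.box (.imp A B)) (.imp (.box A) (.box B)))
  | four (A) : K4Ax (.imp (.box A) (.box (.box A)))

/-- K, 4, and Löb's axiom schemas. -/
inductive GLAx : Form → Prop
  | k (A B) : GLAx (.imp (.box (.imp A B)) (.imp (.box A) (.box B)))
  | four (A) : GLAx (.imp (.box A) (.box (.box A)))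
  | lob (A) : GLAx (.imp (.box (.imp (.box A) A)) (.box A))

/-- IPC_□ : intuitionistic propositional logic over the modal language. -/
def IPCbProves : Form → Prop := Proves (fun _ => False) false

/-- iK4. -/
def iK4Proves : Form → Prop := Proves K4Ax true

/-- iGL. -/
def iGLProves : Form → Prop := Proves GLAx true

/-- the completeness principle CP : A → □A. -/
def CPAx : Form → Prop := fun F => ∃ A : Form, F = .imp A (.box A)

/-- LC := iGL + CP. -/
def LCProves : Form → Prop := Proves (fun F => GLAx F ∨ CPAx F) true

/-- CP restricted to atomic propositions. -/
def CPaAx : Form → Prop := fun F => ∃ A : Form, A.isAtom ∧ F = .imp A (.box A)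

/-- the extended Leivant principle Le⁺ : □A → □A^l. -/
def LeplusAx : Form → Prop := fun F => ∃ A : Form, F = .imp (.box A) (.box A.lev)

/-- LLe⁺ := iGL + Le⁺ + CP_a. -/
def LLeplusProves : Form → Prop := Proves (fun F => GLAx F ∨ LeplusAx F ∨ CPaAx F) true

/-! ## The preservativity relation ▶ -/

/-- the bracket operation [A]B. -/
def bracket (A : Form) : Form → Form
  | .and B C => .and (bracket A B) (bracket A C)
  | .or B C => .or (bracket A B) (bracket A C)
  | .imp B C => .imp A (.imp B C)
  | B => B

def listConj : List Form → Form
  | [] => Form.top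
  | [A] => A
  | A :: l => .and A (listConj l)

def listDisj : List Form → Form
  | [] => Form.bot
  | [A] => A
  | A :: l => .or A (listDisj l)

/-- the relation ▶ : the smallest relation satisfying A1–A4 and B1–B3.
In B2 a (finite) set of implications is represented by a list `X` of pairs `(E, F)`
standing for the implications `E → F`. -/
inductive Pres : Form → Form → Prop
  | a1 {A B} : iK4Proves (.imp A B) → Pres A B
  | a2 {A B C} : Pres A B → Pres B C → Pres A C
  | a3 {A B C} : Pres C A → Pres C B → Pres C (.and A B)
  | a4 {A B} : Pres A B → Pres (.box A) (.box B)
  | b1 {A B C} : Pres A C → Pres B C → Pres (.or A B) C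
  | b2 (X : List (Form × Form)) (C : Form) :
      Pres (.imp (listConj (X.map fun p => Form.imp p.1 p.2)) C)
        (listDisj ((X.map Prod.fst ++ [C]).map
          (bracket (listConj (X.map fun p => Form.imp p.1 p.2)))))
  | b3 {A B C} : Pres A B → (C.isAtom ∨ C.isBoxed) → Pres (.imp C A) (.imp C B)

/-- the axioms of H_σ : LLe⁺ + CP_a + {□A→□B : A ▶ B}. -/
def HsigmaAx : Form → Prop := fun F =>
  GLAx F ∨ LeplusAx F ∨ CPaAx F ∨ ∃ A B : Form, Pres A B ∧ F = .imp (.box A) (.box B)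

/-- H_σ. -/
def HsigmaProves : Form → Prop := Proves HsigmaAx true

/-! ## NNIL/TNNIL approximations -/

/-- `star` is (a realization of) Visser's NNIL-algorithm: `star A` is the best NNIL
approximation of `A` from below. -/
def IsNNILApproxOp (star : Form → Form) : Prop :=
  ∀ A : Form, NNILc (star A) ∧ IPCbProves (.imp (star A) A) ∧
    ∀ B : Form, NNILc B → IPCbProves (.imp B A) → IPCbProves (.imp B (star A))

/-- replace the outermost boxed subformulas of a formula by the fresh variables
`k, k+1, …` (left to right), returning the resulting non-modal skeleton together
with the list of bodies of removed boxes. -/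
def strip : Form → ℕ → Form × List Form
  | .var n, _ => (.var n, [])
  | .bot, _ => (.bot, [])
  | .and A B, k =>
      let pa := strip A k
      let pb := strip B (k + pa.2.length)
      (.and pa.1 pb.1, pa.2 ++ pb.2)
  | .or A B, k =>
      let pa := strip A k
      let pb := strip B (k + pa.2.length)
      (.or pa.1 pb.1, pa.2 ++ pb.2)
  | .imp A B, k =>
      let pa := strip A k
      let pb := strip B (k + pa.2.length)
      (.imp pa.1 pb.1, pa.2 ++ pb.2)
  | .box A, k => (.var k, [A])

/-- simultaneous substitution of formulas for variables. -/
def substF (f : ℕ → Form) : Form → Form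
  | .var n => f n
  | .bot => .bot
  | .and A B => .and (substF f A) (substF f B)
  | .or A B => .or (substF f A) (substF f B)
  | .imp A B => .imp (substF f A) (substF f B)
  | .box A => .box (substF f A)

/-- fuelled version of the TNNIL approximation `A⁺`:
`A⁺ := (A')^*[pᵢ | □Bᵢ⁺]` where `A = A'[pᵢ | □Bᵢ]` with `A'` non-modal. -/
def plusAux (star : Form → Form) : ℕ → Form → Form
  | 0, A => A
  | fuel + 1, A =>
      let k := A.fvb
      let p := strip A k
      substF (fun n =>
        if k ≤ n ∧ n < k + p.2.length then
          .box (plusAux star fuel (p.2.getD (n - k) .bot))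
        else .var n) (star p.1)

/-- the TNNIL approximation `A⁺` (relative to a realization `star` of the NNIL-algorithm). -/
def plusF (star : Form → Form) (A : Form) : Form := plusAux star (A.bdep + 1) A

/-- `A⁻`: writing `A = B(□C₁,…,□Cₙ)` with `B` non-modal, `A⁻ := B(□C₁⁺,…,□Cₙ⁺)`. -/
def minusF (star : Form → Form) (A : Form) : Form :=
  let k := A.fvb
  let p := strip A k
  substF (fun n =>
    if k ≤ n ∧ n < k + p.2.length then
      .box (plusF star (p.2.getD (n - k) .bot))
    else .var n) p.1

/-- the box translation A^□. -/
def boxTr : Form → Form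
  | .var n => Form.boxdot (.var n)
  | .bot => Form.boxdot .bot
  | .and A B => .and (boxTr A) (boxTr B)
  | .or A B => .or (boxTr A) (boxTr B)
  | .imp A B => Form.boxdot (.imp (boxTr A) (boxTr B))
  | .box A => .box (boxTr A)

/-- a Gödel numbering of modal formulas. -/
def encodeForm : Form → ℕ
  | .var n => Nat.pair 0 n
  | .bot => Nat.pair 1 0
  | .and A B => Nat.pair 2 (Nat.pair (encodeForm A) (encodeForm B))
  | .or A B => Nat.pair 3 (Nat.pair (encodeForm A) (encodeForm B))
  | .imp A B => Nat.pair 4 (Nat.pair (encodeForm A) (encodeForm B))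
  | .box A => Nat.pair 5 (encodeForm A)

/-! ## Propositional Kripke models -/

/-- Kripke models for intuitionistic modal logic. -/
structure PKripke where
  W : Type
  le : W → W → Prop
  r : W → W → Prop
  V : W → ℕ → Prop
  le_refl : ∀ w, le w w
  le_trans : ∀ {a b c}, le a b → le b c → le a c
  le_antisymm : ∀ {a b}, le a b → le b a → a = b
  le_r : ∀ {a b c}, le a b → r b c → r a c
  mono : ∀ {a b : W} {n : ℕ}, le a b → V a n → V b n

/-- the forcing relation of a propositional modal Kripke model. -/
def pforces (M : PKripke) : Form → M.W → Prop
  | .var n, w => M.V w n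
  | .bot, _ => False
  | .and A B, w => pforces M A w ∧ pforces M B w
  | .or A B, w => pforces M A w ∨ pforces M B w
  | .imp A B, w => ∀ v, M.le w v → pforces M A v → pforces M B v
  | .box A, w => ∀ v, M.r w v → pforces M A v

namespace PKripke

/-- brilliant: (R;≤) ⊆ R. -/
def Brilliant (M : PKripke) : Prop := ∀ {a b c : M.W}, M.r a b → M.le b c → M.r a c

/-- reverse well-founded: well-founded with respect to R⁻¹. -/
def RevWF (M : PKripke) : Prop := WellFounded (fun a b : M.W => M.r b a)

/-- perfect: brilliant, reverse well-founded, and R ⊆ <. -/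
def Perfect (M : PKripke) : Prop :=
  M.Brilliant ∧ M.RevWF ∧ ∀ {a b : M.W}, M.r a b → M.le a b ∧ a ≠ b

/-- the partial order (W,≤) is a tree: it has a root and the set of predecessors
of every node is linearly ordered. -/
def TreeFrame (M : PKripke) : Prop :=
  (∃ root : M.W, ∀ w, M.le root w) ∧
  ∀ w u v : M.W, M.le u w → M.le v w → (M.le u v ∨ M.le v u)

end PKripke

/-! ## First-order arithmetic -/

/-- terms of the language (S, +, ·, <, 0) (de Bruijn variables). -/
inductive ATerm : Type
  | var : ℕ → ATerm
  | zero : ATerm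
  | succ : ATerm → ATerm
  | add : ATerm → ATerm → ATerm
  | mul : ATerm → ATerm → ATerm
  deriving DecidableEq

namespace ATerm

def lift : ATerm → ℕ → ATerm
  | var n, d => if n < d then var n else var (n + 1)
  | zero, _ => zero
  | succ t, d => succ (t.lift d)
  | add t u, d => add (t.lift d) (u.lift d)
  | mul t u, d => mul (t.lift d) (u.lift d)

def subst : ATerm → ℕ → ATerm → ATerm
  | var n, k, s => if n < k then var n else if n = k then s else var (n - 1)
  | zero, _, _ => zero
  | succ t, k, s => succ (t.subst k s)
  | add t u, k, s => add (t.subst k s) (u.subst k s)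
  | mul t u, k, s => mul (t.subst k s) (u.subst k s)

/-- non-binding substitution: replace `var k` by `s`, leaving other variables alone. -/
def substId : ATerm → ℕ → ATerm → ATerm
  | var n, k, s => if n = k then s else var n
  | zero, _, _ => zero
  | succ t, k, s => succ (t.substId k s)
  | add t u, k, s => add (t.substId k s) (u.substId k s)
  | mul t u, k, s => mul (t.substId k s) (u.substId k s)

/-- all variables have index < k. -/
def vlt : ATerm → ℕ → Prop
  | var n, k => n < k
  | zero, _ => True
  | succ t, k => t.vlt k
  | add t u, k => t.vlt k ∧ u.vlt k
  | mul t u, k => t.vlt k ∧ u.vlt k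

/-- evaluation in the standard model ℕ. -/
def evalN : ATerm → (ℕ → ℕ) → ℕ
  | var n, ρ => ρ n
  | zero, _ => 0
  | succ t, ρ => t.evalN ρ + 1
  | add t u, ρ => t.evalN ρ + u.evalN ρ
  | mul t u, ρ => t.evalN ρ * u.evalN ρ

def fvB : ATerm → ℕ
  | var n => n + 1
  | zero => 0
  | succ t => t.fvB
  | add t u => max t.fvB u.fvB
  | mul t u => max t.fvB u.fvB

/-- a Gödel numbering of terms. -/
def code : ATerm → ℕ
  | var n => Nat.pair 0 n
  | zero => Nat.pair 1 0
  | succ t => Nat.pair 2 t.code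
  | add t u => Nat.pair 3 (Nat.pair t.code u.code)
  | mul t u => Nat.pair 4 (Nat.pair t.code u.code)

end ATerm

/-- the numeral of a natural number. -/
def numeral : ℕ → ATerm
  | 0 => .zero
  | n + 1 => .succ (numeral n)

/-- extend an environment by one value at index 0. -/
def econs {α : Sort*} (b : α) (ρ : ℕ → α) : ℕ → α
  | 0 => b
  | n + 1 => ρ n

/-- first-order formulas of arithmetic (de Bruijn variables). -/
inductive AForm : Type
  | eq : ATerm → ATerm → AForm
  | lt : ATerm → ATerm → AForm
  | fal : AForm
  | and : AForm → AForm → AForm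
  | or : AForm → AForm → AForm
  | imp : AForm → AForm → AForm
  | all : AForm → AForm
  | ex : AForm → AForm
  deriving DecidableEq

namespace AForm

def neg (A : AForm) : AForm := imp A fal

def iffA (A B : AForm) : AForm := and (imp A B) (imp B A)

def lift : AForm → ℕ → AForm
  | eq t u, d => eq (t.lift d) (u.lift d)
  | lt t u, d => lt (t.lift d) (u.lift d)
  | fal, _ => fal
  | and A B, d => and (A.lift d) (B.lift d)
  | or A B, d => or (A.lift d) (B.lift d)
  | imp A B, d => imp (A.lift d) (B.lift d)
  | all A, d => all (A.lift (d + 1))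
  | ex A, d => ex (A.lift (d + 1))

/-- capture-avoiding substitution of a term for variable `k` (instantiating a binder). -/
def subst : AForm → ℕ → ATerm → AForm
  | eq t u, k, s => eq (t.subst k s) (u.subst k s)
  | lt t u, k, s => lt (t.subst k s) (u.subst k s)
  | fal, _, _ => fal
  | and A B, k, s => and (A.subst k s) (B.subst k s)
  | or A B, k, s => or (A.subst k s) (B.subst k s)
  | imp A B, k, s => imp (A.subst k s) (B.subst k s)
  | all A, k, s => all (A.subst (k + 1) (s.lift 0))
  | ex A, k, s => ex (A.subst (k + 1) (s.lift 0))

/-- non-binding substitution: replace the free variable `k` by `s`. -/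
def substId : AForm → ℕ → ATerm → AForm
  | eq t u, k, s => eq (t.substId k s) (u.substId k s)
  | lt t u, k, s => lt (t.substId k s) (u.substId k s)
  | fal, _, _ => fal
  | and A B, k, s => and (A.substId k s) (B.substId k s)
  | or A B, k, s => or (A.substId k s) (B.substId k s)
  | imp A B, k, s => imp (A.substId k s) (B.substId k s)
  | all A, k, s => all (A.substId (k + 1) (s.lift 0))
  | ex A, k, s => ex (A.substId (k + 1) (s.lift 0))

/-- all free variables have index < k. -/
def vlt : AForm → ℕ → Prop
  | eq t u, k => t.vlt k ∧ u.vlt k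
  | lt t u, k => t.vlt k ∧ u.vlt k
  | fal, _ => True
  | and A B, k => A.vlt k ∧ B.vlt k
  | or A B, k => A.vlt k ∧ B.vlt k
  | imp A B, k => A.vlt k ∧ B.vlt k
  | all A, k => A.vlt (k + 1)
  | ex A, k => A.vlt (k + 1)

/-- a bound on the free variables of a formula. -/
def fvB : AForm → ℕ
  | eq t u => max t.fvB u.fvB
  | lt t u => max t.fvB u.fvB
  | fal => 0
  | and A B => max A.fvB B.fvB
  | or A B => max A.fvB B.fvB
  | imp A B => max A.fvB B.fvB
  | all A => A.fvB - 1
  | ex A => A.fvB - 1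

/-- classical (Tarskian) satisfaction in the standard model ℕ. -/
def SatN : AForm → (ℕ → ℕ) → Prop
  | eq t u, ρ => t.evalN ρ = u.evalN ρ
  | lt t u, ρ => t.evalN ρ < u.evalN ρ
  | fal, _ => False
  | and A B, ρ => A.SatN ρ ∧ B.SatN ρ
  | or A B, ρ => A.SatN ρ ∨ B.SatN ρ
  | imp A B, ρ => A.SatN ρ → B.SatN ρ
  | all A, ρ => ∀ n : ℕ, A.SatN (econs n ρ)
  | ex A, ρ => ∃ n : ℕ, A.SatN (econs n ρ)

/-- a Gödel numbering of arithmetic formulas. -/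
def code : AForm → ℕ
  | eq t u => Nat.pair 0 (Nat.pair t.code u.code)
  | lt t u => Nat.pair 1 (Nat.pair t.code u.code)
  | fal => Nat.pair 2 0
  | and A B => Nat.pair 3 (Nat.pair A.code B.code)
  | or A B => Nat.pair 4 (Nat.pair A.code B.code)
  | imp A B => Nat.pair 5 (Nat.pair A.code B.code)
  | all A => Nat.pair 6 A.code
  | ex A => Nat.pair 7 A.code

end AForm

/-- Δ₀ formulas: only bounded quantifiers. -/
inductive Delta0 : AForm → Prop
  | eq (t u) : Delta0 (.eq t u)
  | lt (t u) : Delta0 (.lt t u)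
  | fal : Delta0 .fal
  | and {A B} : Delta0 A → Delta0 B → Delta0 (.and A B)
  | or {A B} : Delta0 A → Delta0 B → Delta0 (.or A B)
  | imp {A B} : Delta0 A → Delta0 B → Delta0 (.imp A B)
  | ball (t : ATerm) {A} : Delta0 A → Delta0 (.all (.imp (.lt (.var 0) (t.lift 0)) A))
  | bex (t : ATerm) {A} : Delta0 A → Delta0 (.ex (.and (.lt (.var 0) (t.lift 0)) A))

/-- Σ₁ formulas: existential quantifiers over a Δ₀ matrix. -/
inductive Sigma1 : AForm → Prop
  | of_delta0 {A} : Delta0 A → Sigma1 A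
  | ex {A} : Sigma1 A → Sigma1 (.ex A)

/-- a Hilbert-style proof system for intuitionistic first-order logic with equality,
from a set `T` of (closed) non-logical axioms. -/
inductive Prf (T : AForm → Prop) : AForm → Prop
  | hyp {A} : T A → Prf T A
  | mp {A B} : Prf T (.imp A B) → Prf T A → Prf T B
  | gen {A} : Prf T A → Prf T (.all A)
  | k (A B) : Prf T (.imp A (.imp B A))
  | s (A B C) : Prf T (.imp (.imp A (.imp B C)) (.imp (.imp A B) (.imp A C)))
  | pair (A B) : Prf T (.imp A (.imp B (.and A B)))
  | fst (A B) : Prf T (.imp (.and A B) A)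
  | snd (A B) : Prf T (.imp (.and A B) B)
  | inl (A B) : Prf T (.imp A (.or A B))
  | inr (A B) : Prf T (.imp B (.or A B))
  | cases (A B C) : Prf T (.imp (.imp A C) (.imp (.imp B C) (.imp (.or A B) C)))
  | exfalso (A) : Prf T (.imp .fal A)
  | allE (A : AForm) (t : ATerm) : Prf T (.imp (.all A) (A.subst 0 t))
  | allShift (A B : AForm) : Prf T (.imp (.all (.imp (B.lift 0) A)) (.imp B (.all A)))
  | exI (A : AForm) (t : ATerm) : Prf T (.imp (A.subst 0 t) (.ex A))
  | exE (A B : AForm) : Prf T (.imp (.all (.imp A (B.lift 0))) (.imp (.ex A) B))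
  | eqRefl : Prf T (.all (.eq (.var 0) (.var 0)))
  | leibniz (A : AForm) : Prf T (.all (.all (.imp (.eq (.var 1) (.var 0))
      (.imp (((A.lift 1).lift 1).substId 0 (.var 1))
            (((A.lift 1).lift 1).substId 0 (.var 0))))))

/-- iterated universal quantification. -/
def ucAux : ℕ → AForm → AForm
  | 0, A => A
  | k + 1, A => ucAux k (.all A)

/-- universal closure. -/
def uc (A : AForm) : AForm := ucAux A.fvB A

/-- the induction axiom for the formula A (induction on variable 0). -/
def indAx (A : AForm) : AForm :=
  uc (.imp (.and (A.subst 0 .zero) (.all (.imp A (A.substId 0 (.succ (.var 0))))))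
      (.all A))

/-- the axioms Q1–Q8. -/
inductive QAx : AForm → Prop
  | q1 : QAx (.all (.imp (.eq (.succ (.var 0)) .zero) .fal))
  | q2 : QAx (.all (.all (.imp (.eq (.succ (.var 1)) (.succ (.var 0))) (.eq (.var 1) (.var 0)))))
  | q3 : QAx (.all (.or (.eq (.var 0) .zero) (.ex (.eq (.succ (.var 0)) (.var 1)))))
  | q4 : QAx (.all (.eq (.add (.var 0) .zero) (.var 0)))
  | q5 : QAx (.all (.all (.eq (.add (.var 1) (.succ (.var 0))) (.succ (.add (.var 1) (.var 0))))))
  | q6 : QAx (.all (.eq (.mul (.var 0) .zero) .zero))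
  | q7 : QAx (.all (.all (.eq (.mul (.var 1) (.succ (.var 0))) (.add (.mul (.var 1) (.var 0)) (.var 1)))))
  | q8 : QAx (.all (.all (AForm.iffA (.lt (.var 1) (.var 0))
      (.ex (.eq (.add (.var 2) (.succ (.var 0))) (.var 1))))))

/-- the axioms of Heyting Arithmetic: Q1–Q8 and full induction. -/
def HAAx : AForm → Prop := fun A => QAx A ∨ ∃ B : AForm, A = indAx B

/-- provability in HA. -/
def HAProves : AForm → Prop := Prf HAAx

/-- interface for the standard arithmetized provability predicate `Prov_HA` of HA:
`Pr A` is the Σ₁ sentence `Prov_HA(⌜A⌝)`. -/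
structure ProvPred where
  Pr : AForm → AForm
  sentence : ∀ A, (Pr A).vlt 0
  sigma1 : ∀ A, Sigma1 (Pr A)
  correct : ∀ A : AForm, ((Pr A).SatN (fun _ => 0) ↔ HAProves A)
  dNec : ∀ A, HAProves A → HAProves (Pr A)
  dK : ∀ A B, HAProves (.imp (Pr (.imp A B)) (.imp (Pr A) (Pr B)))
  dSigma : ∀ A, Sigma1 A → A.vlt 0 → HAProves (.imp A (Pr A))
  dLob : ∀ A, HAProves (.imp (Pr (.imp (Pr A) A)) (Pr A))

/-- the arithmetical interpretation `σ_HA` of modal formulas determined by a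
substitution `σ` and a provability predicate `Pr`. -/
def interp (Pr : AForm → AForm) (σ : ℕ → AForm) : Form → AForm
  | .var n => σ n
  | .bot => .fal
  | .and A B => .and (interp Pr σ A) (interp Pr σ B)
  | .or A B => .or (interp Pr σ A) (interp Pr σ B)
  | .imp A B => .imp (interp Pr σ A) (interp Pr σ B)
  | .box A => Pr (interp Pr σ A)

/-- σ is an arithmetical substitution: it maps atomic variables to sentences. -/
def ArithSubst (σ : ℕ → AForm) : Prop := ∀ n, (σ n).vlt 0

/-- σ is a Σ₁-substitution: it maps atomic variables to Σ₁ sentences. -/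
def Sigma1Subst (σ : ℕ → AForm) : Prop := ∀ n, Sigma1 (σ n) ∧ (σ n).vlt 0

/-! ## The theories HAₓ and indexed provability (for the refined Leivant principle) -/

/-- induction formulas of the special shape (A→B)→B with A, B ∈ Σ₁. -/
def shapeInd (A : AForm) : Prop := ∃ S Tf : AForm, Sigma1 S ∧ Sigma1 Tf ∧ A = .imp (.imp S Tf) Tf

/-- the axioms of HAₓ: Q1-Q8, and induction restricted to formulas of the shape
(A→B)→B with A,B ∈ Σ₁ or with Gödel number ≤ x. -/
def HAxAx (x : ℕ) : AForm → Prop := fun A =>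
  QAx A ∨ ∃ B : AForm, (shapeInd B ∨ B.code ≤ x) ∧ A = indAx B

/-- interface for the arithmetized bounded provability predicates `□ₓ`:
`PrB A` is the Σ₁ formula with free variable 0 expressing `Prov_{HA_{v₀}}(⌜A⌝)`, and
`PrBSub A` (for `A` with one free variable) is the Σ₁ formula with free variables 0, 1
expressing `Prov_{HA_{v₀}}(⌜A(v̇₁)⌝)`. -/
structure BddProvPred where
  PrB : AForm → AForm
  PrBSub : AForm → AForm
  PrB_vlt : ∀ A, (PrB A).vlt 1
  PrB_sigma1 : ∀ A, Sigma1 (PrB A)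
  PrB_correct : ∀ (A : AForm) (n : ℕ),
    ((PrB A).SatN (fun i => if i = 0 then n else 0) ↔ Prf (HAxAx n) A)
  PrBSub_vlt : ∀ A, (PrBSub A).vlt 2
  PrBSub_sigma1 : ∀ A, Sigma1 (PrBSub A)
  PrBSub_correct : ∀ (A : AForm) (n m : ℕ),
    ((PrBSub A).SatN (fun i => if i = 0 then n else m) ↔ Prf (HAxAx n) (A.subst 0 (numeral m)))

/-! ## First-order Kripke models of HA -/

/-- a first-order Kripke model for the language of arithmetic over the frame `(W, le)`:
each node carries a classical structure, and the structure at a smaller node is a weak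
substructure of the structure at a bigger one (realized as subsets of a common universe,
closed under the operations). -/
structure FOKripke (W : Type) (le : W → W → Prop) where
  U : Type
  dom : W → Set U
  zero : U
  succ : U → U
  add : U → U → U
  mul : U → U → U
  ltR : U → U → Prop
  dom_mono : ∀ {a b : W}, le a b → dom a ⊆ dom b
  zero_mem : ∀ a, zero ∈ dom a
  succ_mem : ∀ a x, x ∈ dom a → succ x ∈ dom a
  add_mem : ∀ a x y, x ∈ dom a → y ∈ dom a → add x y ∈ dom a
  mul_mem : ∀ a x y, x ∈ dom a → y ∈ dom a → mul x y ∈ dom a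

/-- evaluation of a term in a first-order Kripke model. -/
def tevalK {W : Type} {le : W → W → Prop} (M : FOKripke W le) (ρ : ℕ → M.U) : ATerm → M.U
  | .var n => ρ n
  | .zero => M.zero
  | .succ t => M.succ (tevalK M ρ t)
  | .add t u => M.add (tevalK M ρ t) (tevalK M ρ u)
  | .mul t u => M.mul (tevalK M ρ t) (tevalK M ρ u)

/-- the forcing relation of a first-order Kripke model. -/
def FOForces {W : Type} {le : W → W → Prop} (M : FOKripke W le) :
    AForm → W → (ℕ → M.U) → Prop
  | .eq t u, _, ρ => tevalK M ρ t = tevalK M ρ u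
  | .lt t u, _, ρ => M.ltR (tevalK M ρ t) (tevalK M ρ u)
  | .fal, _, _ => False
  | .and A B, w, ρ => FOForces M A w ρ ∧ FOForces M B w ρ
  | .or A B, w, ρ => FOForces M A w ρ ∨ FOForces M B w ρ
  | .imp A B, w, ρ => ∀ v, le w v → FOForces M A v ρ → FOForces M B v ρ
  | .all A, w, ρ => ∀ v, le w v → ∀ b ∈ M.dom v, FOForces M A v (econs b ρ)
  | .ex A, w, ρ => ∃ b ∈ M.dom w, FOForces M A w (econs b ρ)

/-- the Kripke model forces all axioms of HA. -/
def ForcesHA {W : Type} {le : W → W → Prop} (M : FOKripke W le) : Prop :=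
  ∀ A : AForm, HAAx A → ∀ w : W, FOForces M A w (fun _ => M.zero)

end PLHA

/-!
Write `B = B'[pᵢ | □Bᵢ]` with `B'` non-modal, so that `B⁺ = (B')^*[pᵢ | □Bᵢ⁺]`, and put
`B⁻ = B'[pᵢ | □Bᵢ⁺]`. Induction on derivations shows that `⊢ B` implies `⊢ B⁻`: the axioms K, 4
and Löb survive because IPC proves `(A → C)⁺ → A⁺ → C⁺` and `(□A)⁺ ↔ □A⁺`, and necessitation
needs the step from `⊢ A⁻` to `⊢ A⁺`. That step holds because the axioms are NNIL and closed
under substitution: a theorem `X[σ]` follows in IPC from a provable NNIL formula `C`, and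
`C ∧ ⋀ₙ (pₙ ↔ σ n)` is an NNIL formula below `X`, hence below `X^*`.

The fresh variables `pᵢ` only avoid the variables of `B`, and `^*` might reintroduce them, so
the argument runs with the variant of the NNIL-algorithm that replaces the variables foreign to
its input by `⊥`. It is IPC-equivalent to the original, hence so are the two versions of `B⁺`
in any logic with K.
-/

namespace PLHA

open Form

section Hilbert

variable {Ax : Form → Prop} {u : Bool} {A B C A' B' : Form}

theorem Proves.imp_self : Proves Ax u (.imp A A) :=
  .mp (.mp (.ipc (.a2 A (.imp A A) A)) (.ipc (.a1 A (.imp A A)))) (.ipc (.a1 A A))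

theorem Proves.of_ipcb (h : IPCbProves A) : Proves Ax u A := by
  induction h with
  | ax h => exact h.elim
  | ipc h => exact .ipc h
  | mp _ _ ih₁ ih₂ => exact ih₁.mp ih₂
  | nec hu _ => exact absurd hu Bool.false_ne_true

/-- Necessitation enters only through closed theorems, which keeps the deduction theorem
valid. -/
inductive ProvesFrom (Ax : Form → Prop) (u : Bool) : List Form → Form → Prop
  | hyp {Γ A} : A ∈ Γ → ProvesFrom Ax u Γ A
  | thm {Γ A} : Proves Ax u A → ProvesFrom Ax u Γ A
  | mp {Γ A B} : ProvesFrom Ax u Γ (.imp A B) → ProvesFrom Ax u Γ A → ProvesFrom Ax u Γ B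

namespace ProvesFrom

variable {Γ : List Form}

theorem ipc (h : IpcAx A) : ProvesFrom Ax u Γ A := thm (.ipc h)

theorem head : ProvesFrom Ax u (A :: Γ) A := hyp List.mem_cons_self

theorem weaken (h : ProvesFrom Ax u Γ A) : ProvesFrom Ax u (B :: Γ) A := by
  induction h with
  | hyp h => exact hyp (List.mem_cons_of_mem _ h)
  | thm h => exact thm h
  | mp _ _ ih₁ ih₂ => exact mp ih₁ ih₂

theorem deduction (h : ProvesFrom Ax u (B :: Γ) A) : ProvesFrom Ax u Γ (.imp B A) := by
  induction h with
  | hyp h =>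
    rcases List.mem_cons.mp h with rfl | h
    · exact thm .imp_self
    · exact mp (ipc (.a1 _ _)) (hyp h)
  | thm h => exact mp (ipc (.a1 _ _)) (thm h)
  | mp _ _ ih₁ ih₂ => exact mp (mp (ipc (.a2 _ _ _)) ih₁) ih₂

theorem proves (h : ProvesFrom Ax u [] A) : Proves Ax u A := by
  induction h with
  | hyp h => exact absurd h List.not_mem_nil
  | thm h => exact h
  | mp _ _ ih₁ ih₂ => exact ih₁.mp ih₂

theorem andI (h₁ : ProvesFrom Ax u Γ A) (h₂ : ProvesFrom Ax u Γ B) :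
    ProvesFrom Ax u Γ (.and A B) :=
  mp (mp (ipc (.a3 _ _)) h₁) h₂

theorem andE₁ (h : ProvesFrom Ax u Γ (.and A B)) : ProvesFrom Ax u Γ A := mp (ipc (.a4 _ _)) h

theorem andE₂ (h : ProvesFrom Ax u Γ (.and A B)) : ProvesFrom Ax u Γ B := mp (ipc (.a5 _ _)) h

theorem orI₁ (h : ProvesFrom Ax u Γ A) : ProvesFrom Ax u Γ (.or A B) := mp (ipc (.a6 _ _)) h

theorem orI₂ (h : ProvesFrom Ax u Γ B) : ProvesFrom Ax u Γ (.or A B) := mp (ipc (.a7 _ _)) h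

theorem orE (h : ProvesFrom Ax u Γ (.or A B)) (h₁ : ProvesFrom Ax u Γ (.imp A C))
    (h₂ : ProvesFrom Ax u Γ (.imp B C)) : ProvesFrom Ax u Γ C :=
  mp (mp (mp (ipc (.a8 _ _ _)) h₁) h₂) h

theorem iff_mp (h : ProvesFrom Ax u Γ (iffF A B)) (hA : ProvesFrom Ax u Γ A) :
    ProvesFrom Ax u Γ B :=
  mp (andE₁ h) hA

theorem iff_mpr (h : ProvesFrom Ax u Γ (iffF A B)) (hB : ProvesFrom Ax u Γ B) :
    ProvesFrom Ax u Γ A :=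
  mp (andE₂ h) hB

theorem iff_and (h₁ : ProvesFrom Ax u Γ (iffF A A')) (h₂ : ProvesFrom Ax u Γ (iffF B B')) :
    ProvesFrom Ax u Γ (iffF (.and A B) (.and A' B')) :=
  andI (deduction (andI (h₁.weaken.iff_mp head.andE₁) (h₂.weaken.iff_mp head.andE₂)))
    (deduction (andI (h₁.weaken.iff_mpr head.andE₁) (h₂.weaken.iff_mpr head.andE₂)))

theorem iff_or (h₁ : ProvesFrom Ax u Γ (iffF A A')) (h₂ : ProvesFrom Ax u Γ (iffF B B')) :
    ProvesFrom Ax u Γ (iffF (.or A B) (.or A' B')) :=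
  andI
    (deduction (orE head (deduction (orI₁ (h₁.weaken.weaken.iff_mp head)))
      (deduction (orI₂ (h₂.weaken.weaken.iff_mp head)))))
    (deduction (orE head (deduction (orI₁ (h₁.weaken.weaken.iff_mpr head)))
      (deduction (orI₂ (h₂.weaken.weaken.iff_mpr head)))))

theorem iff_imp (h₁ : ProvesFrom Ax u Γ (iffF A A')) (h₂ : ProvesFrom Ax u Γ (iffF B B')) :
    ProvesFrom Ax u Γ (iffF (.imp A B) (.imp A' B')) :=
  andI
    (deduction (deduction
      (h₂.weaken.weaken.iff_mp (mp head.weaken (h₁.weaken.weaken.iff_mpr head)))))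
    (deduction (deduction
      (h₂.weaken.weaken.iff_mpr (mp head.weaken (h₁.weaken.weaken.iff_mp head)))))

end ProvesFrom

def ProvesK (Ax : Form → Prop) : Prop :=
  ∀ A B, Proves Ax true (.imp (.box (.imp A B)) (.imp (.box A) (.box B)))

namespace Proves

theorem andI (h₁ : Proves Ax u A) (h₂ : Proves Ax u B) : Proves Ax u (.and A B) :=
  ((Proves.ipc (.a3 _ _)).mp h₁).mp h₂

theorem andE₁ (h : Proves Ax u (.and A B)) : Proves Ax u A := (Proves.ipc (.a4 _ _)).mp h

theorem andE₂ (h : Proves Ax u (.and A B)) : Proves Ax u B := (Proves.ipc (.a5 _ _)).mp h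

theorem imp_trans (h₁ : Proves Ax u (.imp A B)) (h₂ : Proves Ax u (.imp B C)) :
    Proves Ax u (.imp A C) :=
  (ProvesFrom.deduction (.mp (.thm h₂) (.mp (.thm h₁) .head))).proves

theorem iff_refl : Proves Ax u (iffF A A) := andI imp_self imp_self

theorem iff_symm (h : Proves Ax u (iffF A B)) : Proves Ax u (iffF B A) := andI h.andE₂ h.andE₁

theorem iff_trans (h₁ : Proves Ax u (iffF A B)) (h₂ : Proves Ax u (iffF B C)) :
    Proves Ax u (iffF A C) :=
  andI (h₁.andE₁.imp_trans h₂.andE₁) (h₂.andE₂.imp_trans h₁.andE₂)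

theorem iff_mp (h : Proves Ax u (iffF A B)) (hA : Proves Ax u A) : Proves Ax u B := h.andE₁.mp hA

theorem subst (hAx : ∀ σ X, Ax X → Ax (substF σ X)) (σ : ℕ → Form) (h : Proves Ax u A) :
    Proves Ax u (substF σ A) := by
  induction h with
  | ax h => exact .ax (hAx σ _ h)
  | ipc h => exact .ipc (by cases h <;> constructor)
  | mp _ _ ih₁ ih₂ => exact ih₁.mp ih₂
  | nec hu _ ih => exact .nec hu ih

theorem box_mono (hK : ProvesK Ax)
    (h : Proves Ax true (.imp A B)) : Proves Ax true (.imp (.box A) (.box B)) :=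
  (hK A B).mp (.nec rfl h)

theorem box_iff (hK : ProvesK Ax)
    (h : Proves Ax true (iffF A B)) : Proves Ax true (iffF (.box A) (.box B)) :=
  andI (box_mono hK h.andE₁) (box_mono hK h.andE₂)

end Proves

theorem IPCbProves.subst (σ : ℕ → Form) (h : IPCbProves A) : IPCbProves (substF σ A) :=
  Proves.subst (fun _ _ h => h.elim) σ h

end Hilbert

def Form.vars : Form → Finset ℕ
  | var n => {n}
  | bot => ∅
  | and A B | or A B | imp A B => A.vars ∪ B.vars
  | box A => A.vars

theorem lt_fvb_of_mem_vars {n : ℕ} {X : Form} (h : n ∈ X.vars) : n < X.fvb := by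
  induction X with
  | var m => simp_all [vars, fvb]
  | bot => simp [vars] at h
  | box A ih => exact ih h
  | and A B ihA ihB | or A B ihA ihB | imp A B ihA ihB =>
    rcases Finset.mem_union.mp h with h | h
    · exact lt_max_of_lt_left (ihA h)
    · exact lt_max_of_lt_right (ihB h)

theorem substF_congr {σ τ : ℕ → Form} {X : Form} (h : ∀ n ∈ X.vars, σ n = τ n) :
    substF σ X = substF τ X := by
  induction X <;> simp_all [vars, substF]

theorem substF_var (X : Form) : substF Form.var X = X := by
  induction X <;> simp_all [substF]

theorem substF_eq_self {σ : ℕ → Form} {X : Form} (h : ∀ n ∈ X.vars, σ n = .var n) :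
    substF σ X = X :=
  (substF_congr h).trans (substF_var X)

theorem substF_substF (σ τ : ℕ → Form) (X : Form) :
    substF σ (substF τ X) = substF (fun n => substF σ (τ n)) X := by
  induction X <;> simp_all [substF]

theorem exists_mem_vars_of_mem_vars_substF {σ : ℕ → Form} {m : ℕ} {X : Form}
    (h : m ∈ (substF σ X).vars) : ∃ n ∈ X.vars, m ∈ (σ n).vars := by
  induction X with
  | var k => exact ⟨k, Finset.mem_singleton_self k, h⟩
  | bot => simp [substF, vars] at h
  | box A ih => exact ih h
  | and A B ihA ihB | or A B ihA ihB | imp A B ihA ihB =>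
    simp only [substF, vars, Finset.mem_union] at h
    rcases h with h | h
    · obtain ⟨n, h₁, h₂⟩ := ihA h; exact ⟨n, Finset.mem_union_left _ h₁, h₂⟩
    · obtain ⟨n, h₁, h₂⟩ := ihB h; exact ⟨n, Finset.mem_union_right _ h₁, h₂⟩

theorem rho_substF_le {σ : ℕ → Form} (hσ : ∀ n, (σ n).rho = 0) (X : Form) :
    (substF σ X).rho ≤ X.rho := by
  induction X <;> simp_all [substF, rho] <;> omega

theorem substF_listConj (σ : ℕ → Form) (l : List Form) :
    substF σ (listConj l) = listConj (l.map (substF σ)) := by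
  induction l with
  | nil => rfl
  | cons A l ih => cases l <;> simp_all [listConj, substF]

theorem rho_listConj_le {l : List Form} (h : ∀ C ∈ l, C.rho ≤ 1) :
    (listConj l).rho ≤ 1 := by
  induction l with
  | nil => simp [listConj, top, rho]
  | cons A l ih => cases l <;> simp_all [listConj, rho]

section ListConj

variable {Ax : Form → Prop} {u : Bool} {C : Form} {l : List Form}

theorem Proves.listConj_imp (h : C ∈ l) : Proves Ax u (.imp (listConj l) C) := by
  induction l with
  | nil => exact absurd h List.not_mem_nil
  | cons A l ih =>
    rcases l with _ | ⟨B, l⟩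
    · rw [List.mem_singleton.mp h]; exact .imp_self
    · rcases List.mem_cons.mp h with rfl | h
      · exact .ipc (.a4 _ _)
      · exact (Proves.ipc (.a5 _ _)).imp_trans (ih h)

theorem Proves.listConj_intro (h : ∀ C ∈ l, Proves Ax u C) : Proves Ax u (listConj l) := by
  induction l with
  | nil => exact .imp_self
  | cons A l ih =>
    rcases l with _ | ⟨B, l⟩
    · exact h A List.mem_cons_self
    · exact .andI (h A List.mem_cons_self) (ih fun C hC => h C (List.mem_cons_of_mem _ hC))

end ListConj

section Strip

theorem strip_snd_indep (X : Form) (k k' : ℕ) : (strip X k).2 = (strip X k').2 := by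
  induction X generalizing k k' with
  | var | bot | box => rfl
  | and A B ihA ihB | or A B ihA ihB | imp A B ihA ihB =>
    simp only [strip]
    rw [ihA k k', ihB _ (k' + (strip A k').2.length)]

theorem boxFree_strip_fst (X : Form) (k : ℕ) : (strip X k).1.boxFree = true := by
  induction X generalizing k <;> simp_all [strip, boxFree]

theorem mem_vars_of_mem_vars_strip_fst {X : Form} {k n : ℕ} (h : n ∈ (strip X k).1.vars) :
    n ∈ X.vars ∨ (k ≤ n ∧ n < k + (strip X k).2.length) := by
  induction X generalizing k with
  | var | bot => exact .inl h
  | box A =>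
    simp only [strip, vars, Finset.mem_singleton] at h
    exact .inr ⟨h.ge, by simp [h, strip]⟩
  | and A B ihA ihB | or A B ihA ihB | imp A B ihA ihB =>
    simp only [strip, vars, Finset.mem_union, List.length_append] at h ⊢
    rcases h with h | h
    · rcases ihA h with h | h
      · exact .inl (.inl h)
      · exact .inr (by omega)
    · rcases ihB h with h | h
      · exact .inl (.inr h)
      · exact .inr (by omega)

theorem mem_vars_of_mem_strip_snd {X E : Form} {k n : ℕ} (hE : E ∈ (strip X k).2)
    (h : n ∈ E.vars) : n ∈ X.vars := by
  induction X generalizing k with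
  | var | bot => simp [strip] at hE
  | box A => simp only [strip, List.mem_singleton] at hE; exact hE ▸ h
  | and A B ihA ihB | or A B ihA ihB | imp A B ihA ihB =>
    simp only [strip, List.mem_append] at hE
    simp only [vars, Finset.mem_union]
    exact hE.imp ihA ihB

theorem bdep_lt_of_mem_strip_snd {X E : Form} {k : ℕ} (hE : E ∈ (strip X k).2) :
    E.bdep < X.bdep := by
  induction X generalizing k with
  | var | bot => simp [strip] at hE
  | box A => simp only [strip, List.mem_singleton] at hE; simp [hE, bdep]
  | and A B ihA ihB | or A B ihA ihB | imp A B ihA ihB =>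
    simp only [strip, List.mem_append] at hE
    simp only [bdep, lt_max_iff]
    exact hE.imp ihA ihB

theorem strip_fst_eq_substF {X : Form} {k₀ k : ℕ} (hX : X.fvb ≤ k₀) (hk : k₀ ≤ k) :
    (strip X k).1 =
      substF (fun n => if k₀ ≤ n then .var (n + (k - k₀)) else .var n) (strip X k₀).1 := by
  induction X generalizing k₀ k with
  | var m => simp only [fvb] at hX; simp [strip, substF, show ¬ k₀ ≤ m by omega]
  | bot => rfl
  | box A => simp [strip, substF]; omega
  | and A B ihA ihB | or A B ihA ihB | imp A B ihA ihB =>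
    simp only [fvb, max_le_iff] at hX
    simp only [strip, substF]
    rw [strip_snd_indep A k k₀, ihA hX.1 hk, ihB (k₀ := k₀ + (strip A k₀).2.length)
      (k := k + (strip A k₀).2.length) (by omega) (by omega)]
    congr 1
    refine substF_congr fun n hn => ?_
    rcases mem_vars_of_mem_vars_strip_fst hn with h | h
    · have := lt_fvb_of_mem_vars h
      simp [show ¬ k₀ + (strip A k₀).2.length ≤ n by omega, show ¬ k₀ ≤ n by omega]
    · simp only [if_pos h.1, if_pos (by omega : k₀ ≤ n), Form.var.injEq]
      omega

end Strip

section Congruence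

variable {Ax : Form → Prop} {u : Bool}

theorem ProvesFrom.substF_iff_of_boxFree {Γ : List Form} {σ τ : ℕ → Form} {X : Form}
    (hX : X.boxFree = true) (h : ∀ n ∈ X.vars, ProvesFrom Ax u Γ (iffF (σ n) (τ n))) :
    ProvesFrom Ax u Γ (iffF (substF σ X) (substF τ X)) := by
  induction X with
  | var n => exact h n (Finset.mem_singleton_self n)
  | bot => exact .thm .iff_refl
  | box => simp [boxFree] at hX
  | and A B ihA ihB | or A B ihA ihB | imp A B ihA ihB =>
    simp only [boxFree, Bool.and_eq_true] at hX
    have hA := ihA hX.1 fun n hn => h n (Finset.mem_union_left _ hn)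
    have hB := ihB hX.2 fun n hn => h n (Finset.mem_union_right _ hn)
    first
      | exact ProvesFrom.iff_and hA hB
      | exact ProvesFrom.iff_or hA hB
      | exact ProvesFrom.iff_imp hA hB

theorem Proves.substF_iff
    (hK : ProvesK Ax)
    {σ τ : ℕ → Form} (h : ∀ n, Proves Ax true (iffF (σ n) (τ n))) (X : Form) :
    Proves Ax true (iffF (substF σ X) (substF τ X)) := by
  induction X with
  | var n => exact h n
  | bot => exact .iff_refl
  | box A ih => exact .box_iff hK ih
  | and A B ihA ihB => exact (ProvesFrom.iff_and (.thm ihA) (.thm ihB)).proves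
  | or A B ihA ihB => exact (ProvesFrom.iff_or (.thm ihA) (.thm ihB)).proves
  | imp A B ihA ihB => exact (ProvesFrom.iff_imp (.thm ihA) (.thm ihB)).proves

end Congruence

section Approximation

variable {S S' : Form → Form}

theorem IsNNILApproxOp.iff (hS : IsNNILApproxOp S) (hS' : IsNNILApproxOp S') (X : Form) :
    IPCbProves (iffF (S X) (S' X)) :=
  .andI ((hS' X).2.2 _ (hS X).1 (hS X).2.1) ((hS X).2.2 _ (hS' X).1 (hS' X).2.1)

theorem IsNNILApproxOp.substF_imp (hS : IsNNILApproxOp S) {σ : ℕ → Form}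
    (hσ : ∀ n, (σ n).rho = 0) (X : Form) :
    IPCbProves (.imp (substF σ (S X)) (S (substF σ X))) :=
  (hS _).2.2 _ ((rho_substF_le hσ _).trans (hS X).1) (IPCbProves.subst σ (hS X).2.1)

def NoNewVars (S : Form → Form) : Prop := ∀ X, (S X).vars ⊆ X.vars

def cleanup (S : Form → Form) (X : Form) : Form :=
  substF (fun n => if n ∈ X.vars then .var n else .bot) (S X)

theorem mem_vars_of_mem_vars_cleanup {X : Form} {n : ℕ} (h : n ∈ (cleanup S X).vars) :
    n ∈ X.vars := by
  obtain ⟨m, -, hm⟩ := exists_mem_vars_of_mem_vars_substF h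
  by_cases hmX : m ∈ X.vars
  · simp_all [vars]
  · simp [hmX, vars] at hm

theorem IsNNILApproxOp.imp_cleanup (hS : IsNNILApproxOp S) (X : Form) :
    IPCbProves (.imp (S X) (cleanup S X)) := by
  set N := max (S X).fvb X.fvb
  -- `κ` lifts the variables foreign to `X` above those of `S X`; `θ` undoes the lift and sends
  -- the unlifted foreign variables to `⊥`
  set κ : ℕ → Form := fun n => if n ∈ X.vars then .var n else .var (n + N)
  set θ : ℕ → Form := fun n =>
    if N ≤ n then .var (n - N) else if n ∈ X.vars then .var n else .bot
  have hκX : substF κ X = X := substF_eq_self fun n hn => if_pos hn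
  have h := IPCbProves.subst θ
    (hS.substF_imp (σ := κ) (fun n => by simp only [κ]; split <;> rfl) X)
  rw [hκX] at h
  have hθκ : substF θ (substF κ (S X)) = S X := by
    rw [substF_substF]
    refine substF_eq_self fun n hn => ?_
    have : n < N := (lt_fvb_of_mem_vars hn).trans_le (le_max_left _ _)
    by_cases hnX : n ∈ X.vars <;> simp [κ, θ, substF, hnX, this.not_ge]
  have hθ : substF θ (S X) = cleanup S X := substF_congr fun n hn => by
    have : n < N := (lt_fvb_of_mem_vars hn).trans_le (le_max_left _ _)
    simp [θ, this.not_ge]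
  simpa only [substF, hθκ, hθ] using h

theorem IsNNILApproxOp.cleanup (hS : IsNNILApproxOp S) : IsNNILApproxOp (cleanup S) := by
  intro X
  refine ⟨(rho_substF_le (fun n => ?_) _).trans (hS X).1, ?_,
    fun D hD hDX => ((hS X).2.2 D hD hDX).imp_trans (hS.imp_cleanup X)⟩
  · split <;> rfl
  · have h := IPCbProves.subst (fun n => if n ∈ X.vars then .var n else .bot) (hS X).2.1
    rwa [substF, substF_eq_self fun n hn => if_pos hn] at h

theorem plusAux_iff_plusAux {Ax : Form → Prop}
    (hK : ProvesK Ax)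
    (hS : IsNNILApproxOp S) (hS' : IsNNILApproxOp S') (f : ℕ) (A : Form) :
    Proves Ax true (iffF (plusAux S f A) (plusAux S' f A)) := by
  induction f generalizing A with
  | zero => exact .iff_refl
  | succ f ih =>
    simp only [plusAux]
    refine .iff_trans (.of_ipcb (IPCbProves.subst _ (hS.iff hS' _)))
      (.substF_iff hK (fun n => ?_) _)
    split
    · exact .box_iff hK (ih _)
    · exact .iff_refl

end Approximation

section Plus

variable {S : Form → Form}

theorem List.getD_mem_of_lt {α : Type*} {l : List α} {n : ℕ} {d : α} (h : n < l.length) :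
    l.getD n d ∈ l := by
  rw [List.getD_eq_getElem _ _ h]
  exact List.getElem_mem h

theorem bdep_getD_strip_snd_lt {X : Form} {k j : ℕ} (h : j < (strip X k).2.length) :
    ((strip X k).2.getD j .bot).bdep < X.bdep :=
  bdep_lt_of_mem_strip_snd (List.getD_mem_of_lt h)

theorem plusAux_eq_plusF {f : ℕ} {X : Form} (h : X.bdep < f) : plusAux S f X = plusF S X := by
  induction f using Nat.strong_induction_on generalizing X with
  | _ f ih =>
    obtain ⟨g, rfl⟩ := Nat.exists_eq_add_one_of_ne_zero (by omega : f ≠ 0)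
    simp only [plusF, plusAux]
    congr 1
    funext n
    split
    · have hE := bdep_getD_strip_snd_lt (X := X) (k := X.fvb) (j := n - X.fvb) (by omega)
      rw [ih g (by omega) (by omega), ih X.bdep (by omega) hE]
    · rfl

def plug (S : Form → Form) (k : ℕ) (L : List Form) (n : ℕ) : Form :=
  if k ≤ n ∧ n < k + L.length then .box (plusF S (L.getD (n - k) .bot)) else .var n

theorem plusF_eq (X : Form) :
    plusF S X = substF (plug S X.fvb (strip X X.fvb).2) (S (strip X X.fvb).1) := by
  simp only [plusF, plusAux]
  congr 1
  funext n
  unfold plug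
  split
  · rw [plusAux_eq_plusF (bdep_getD_strip_snd_lt (by omega))]
  · rfl

theorem vars_plusF_subset (hSv : NoNewVars S) (X : Form) :
    (plusF S X).vars ⊆ X.vars := by
  suffices ∀ f X, (plusAux S f X).vars ⊆ X.vars from this _ X
  intro f
  induction f with
  | zero => exact fun _ => subset_rfl
  | succ f ih =>
    intro X m hm
    obtain ⟨n, hn, hmn⟩ := exists_mem_vars_of_mem_vars_substF hm
    split at hmn
    · exact mem_vars_of_mem_strip_snd (List.getD_mem_of_lt (by omega)) (ih _ hmn)
    · rw [Finset.mem_singleton.mp hmn]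
      exact (mem_vars_of_mem_vars_strip_fst (hSv _ hn)).resolve_right ‹_›

theorem plug_of_lt {k n : ℕ} (L : List Form) (h : n < k) : plug S k L n = .var n := by
  simp [plug, show ¬ k ≤ n by omega]

theorem plug_append_left {k n : ℕ} {L : List Form} (L' : List Form) (h : n < k + L.length) :
    plug S k (L ++ L') n = plug S k L n := by
  unfold plug
  by_cases hn : k ≤ n
  · rw [if_pos ⟨hn, by simp; omega⟩, if_pos ⟨hn, h⟩,
      List.getD_append _ _ _ _ (by omega : n - k < L.length)]
  · simp [hn]

theorem plug_append_right {k n : ℕ} {L L' : List Form} (h : ¬ (k ≤ n ∧ n < k + L.length)) :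
    plug S k (L ++ L') n = plug S (k + L.length) L' n := by
  unfold plug
  by_cases hn : k ≤ n
  · have : k + L.length ≤ n := by omega
    simp only [List.length_append, List.getD_append_right _ _ _ _ (by omega : L.length ≤ n - k),
      Nat.sub_sub, hn, this, true_and]
    congr 2
    omega
  · simp [hn, show ¬ k + L.length ≤ n by omega]

/-- `A⁻` of the paper, computed compositionally: each outermost `□C` becomes `□C⁺`. -/
def minusH (S : Form → Form) : Form → Form
  | .var n => .var n
  | .bot => .bot
  | .and A B => .and (minusH S A) (minusH S B)
  | .or A B => .or (minusH S A) (minusH S B)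
  | .imp A B => .imp (minusH S A) (minusH S B)
  | .box A => .box (plusF S A)

theorem substF_plug_strip {X : Form} {k : ℕ} (hk : X.fvb ≤ k) :
    substF (plug S k (strip X k).2) (strip X k).1 = minusH S X := by
  induction X generalizing k with
  | var m => exact plug_of_lt _ (by simp only [fvb] at hk; omega)
  | bot => rfl
  | box A => simp [strip, substF, plug, minusH]
  | and A B ihA ihB | or A B ihA ihB | imp A B ihA ihB =>
    simp only [fvb, max_le_iff] at hk
    simp only [strip, substF, minusH]
    rw [← ihA hk.1, ← ihB (k := k + (strip A k).2.length) (by omega)]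
    congr 1 <;> refine substF_congr fun n hn => ?_
    · refine plug_append_left _ ?_
      rcases mem_vars_of_mem_vars_strip_fst hn with h | h
      · have := lt_fvb_of_mem_vars h; omega
      · omega
    · refine plug_append_right ?_
      rcases mem_vars_of_mem_vars_strip_fst hn with h | h
      · have := lt_fvb_of_mem_vars h; omega
      · omega

theorem IsNNILApproxOp.substF_iff_of_leftInverse (hS : IsNNILApproxOp S)
    (hSv : NoNewVars S) {r r' : ℕ → Form} (hr : ∀ n, (r n).rho = 0)
    (hr' : ∀ n, (r' n).rho = 0) {Y : Form} (hY : ∀ n ∈ Y.vars, substF r' (r n) = .var n)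
    (hY' : ∀ n ∈ (substF r Y).vars, substF r (r' n) = .var n) :
    IPCbProves (iffF (substF r (S Y)) (S (substF r Y))) := by
  refine .andI (hS.substF_imp hr Y) ?_
  have h := IPCbProves.subst r (hS.substF_imp hr' (substF r Y))
  have hback : substF r (substF r' (S (substF r Y))) = S (substF r Y) := by
    rw [substF_substF]
    exact substF_eq_self fun n hn => hY' n (hSv _ hn)
  rwa [substF, hback, substF_substF r' r Y, substF_eq_self hY] at h

theorem plusF_iff_substF_plug_strip (hS : IsNNILApproxOp S) (hSv : NoNewVars S)
    {X : Form} {k : ℕ} (hk : X.fvb ≤ k) :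
    IPCbProves (iffF (substF (plug S k (strip X k).2) (S (strip X k).1)) (plusF S X)) := by
  set r : ℕ → Form := fun n => if X.fvb ≤ n then .var (n + (k - X.fvb)) else .var n
  set r' : ℕ → Form := fun n => if k ≤ n then .var (n - (k - X.fvb)) else .var n
  have hshift : (strip X k).1 = substF r (strip X X.fvb).1 := strip_fst_eq_substF le_rfl hk
  have hren := hS.substF_iff_of_leftInverse hSv (r := r) (r' := r')
    (fun n => by simp only [r]; split <;> rfl) (fun n => by simp only [r']; split <;> rfl)
    (fun n _ => by by_cases h : X.fvb ≤ n <;> simp [r, r', substF, h] <;> omega)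
    (fun n hn => by
      rw [← hshift] at hn
      rcases mem_vars_of_mem_vars_strip_fst hn with h | h
      · have := lt_fvb_of_mem_vars h
        simp [r, r', substF, show ¬ k ≤ n by omega, show ¬ X.fvb ≤ n by omega]
      · simp [r, r', substF, h.1, show X.fvb ≤ n - (k - X.fvb) by omega]
        omega)
  have h : IPCbProves (iffF (substF (plug S k (strip X X.fvb).2) (substF r (S (strip X X.fvb).1)))
      (substF (plug S k (strip X X.fvb).2) (S (substF r (strip X X.fvb).1)))) :=
    IPCbProves.subst _ hren
  have hplug : substF (plug S k (strip X X.fvb).2) (substF r (S (strip X X.fvb).1)) =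
      substF (plug S X.fvb (strip X X.fvb).2) (S (strip X X.fvb).1) := by
    rw [substF_substF]
    refine substF_congr fun n hn => ?_
    rcases mem_vars_of_mem_vars_strip_fst (hSv _ hn) with h | h
    · have := lt_fvb_of_mem_vars h
      simp [r, substF, plug_of_lt _ (show n < k by omega), plug_of_lt _ this, this.not_ge]
    · simp only [r, if_pos h.1, substF, plug]
      rw [if_pos (by omega), if_pos h, show n + (k - X.fvb) - k = n - X.fvb by omega]
  rw [hplug] at h
  rw [strip_snd_indep X k X.fvb, hshift, plusF_eq]
  exact h.iff_symm

theorem IsNNILApproxOp.iff_var (hS : IsNNILApproxOp S) (n : ℕ) :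
    IPCbProves (iffF (S (.var n)) (.var n)) :=
  .andI (hS _).2.1 ((hS _).2.2 _ (by simp [NNILc, rho]) .imp_self)

theorem plusF_box_iff (hS : IsNNILApproxOp S) (A : Form) :
    IPCbProves (iffF (plusF S (.box A)) (.box (plusF S A))) := by
  have h := IPCbProves.subst (plug S A.fvb [A]) (hS.iff_var A.fvb)
  rw [plusF_eq]
  simpa [plug, iffF, substF, strip, fvb] using h

theorem IsNNILApproxOp.imp_imp (hS : IsNNILApproxOp S) (A B : Form) :
    IPCbProves (.imp (S (.imp A B)) (.imp (S A) (S B))) := by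
  have hB : IPCbProves (.imp (.and (S (.imp A B)) (S A)) B) :=
    (ProvesFrom.deduction (.mp (.mp (.thm (hS _).2.1) ProvesFrom.head.andE₁)
      (.mp (.thm (hS _).2.1) ProvesFrom.head.andE₂))).proves
  have hSB := (hS B).2.2 (.and (S (.imp A B)) (S A)) (max_le (hS _).1 (hS _).1) hB
  exact (ProvesFrom.deduction (ProvesFrom.deduction
    (.mp (.thm hSB) (.andI (.hyp (by simp)) .head)))).proves

theorem plusF_imp (hS : IsNNILApproxOp S) (hSv : NoNewVars S) (A B : Form) :
    IPCbProves (.imp (plusF S (.imp A B)) (.imp (plusF S A) (plusF S B))) := by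
  set k := (A.imp B).fvb
  have hA : A.fvb ≤ k := le_max_left _ _
  have hB : B.fvb ≤ k := le_max_right _ _
  set k' := k + (strip A k).2.length
  have h := IPCbProves.subst (plug S k (strip (A.imp B) k).2)
    (hS.imp_imp (strip A k).1 (strip B k').1)
  have eA : substF (plug S k (strip (A.imp B) k).2) (S (strip A k).1) =
      substF (plug S k (strip A k).2) (S (strip A k).1) := substF_congr fun n hn => by
    refine plug_append_left _ ?_
    rcases mem_vars_of_mem_vars_strip_fst (hSv _ hn) with h | h
    · have := lt_fvb_of_mem_vars h; omega
    · omega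
  have eB : substF (plug S k (strip (A.imp B) k).2) (S (strip B k').1) =
      substF (plug S k' (strip B k').2) (S (strip B k').1) := substF_congr fun n hn => by
    refine plug_append_right ?_
    rcases mem_vars_of_mem_vars_strip_fst (hSv _ hn) with h | h
    · have := lt_fvb_of_mem_vars h; omega
    · omega
  have cA := plusF_iff_substF_plug_strip hS hSv hA
  have cB := plusF_iff_substF_plug_strip hS hSv (show B.fvb ≤ k' by omega)
  simp only [substF, eA, eB] at h
  rw [plusF_eq (A.imp B)]
  exact (ProvesFrom.deduction (ProvesFrom.deduction ((ProvesFrom.thm cB).iff_mp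
    (.mp (.mp (.thm h) (.hyp (List.mem_cons_of_mem _ List.mem_cons_self)))
      ((ProvesFrom.thm cA).iff_mpr .head))))).proves

theorem substF_plug_plug (hSv : NoNewVars S) {k : ℕ} {L : List Form}
    (hL : ∀ E ∈ L, ∀ n ∈ E.vars, n < k) (n : ℕ) :
    substF (plug S k L) (plug S k L n) = plug S k L n := by
  by_cases h : k ≤ n ∧ n < k + L.length
  · have hn : plug S k L n = .box (plusF S (L.getD (n - k) .bot)) := if_pos h
    rw [hn, substF, substF_eq_self fun m hm => plug_of_lt _
      (hL _ (List.getD_mem_of_lt (by omega)) m (vars_plusF_subset hSv _ hm))]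
  · have hn : plug S k L n = .var n := if_neg h
    rw [hn]
    exact hn

end Plus

section Preservation

variable {Ax : Form → Prop} {u : Bool} {S : Form → Form}

theorem exists_nnil_of_proves (hAxN : ∀ X, Ax X → NNILc X) {A : Form} (h : Proves Ax u A) :
    ∃ C, NNILc C ∧ Proves Ax u C ∧ IPCbProves (.imp C A) := by
  induction h with
  | ax h => exact ⟨_, hAxN _ h, .ax h, .imp_self⟩
  | ipc h =>
    exact ⟨top, by simp [NNILc, top, rho], .imp_self, (ProvesFrom.deduction (.ipc h)).proves⟩
  | mp _ _ ih₁ ih₂ =>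
    obtain ⟨C₁, hC₁, h₁, i₁⟩ := ih₁
    obtain ⟨C₂, hC₂, h₂, i₂⟩ := ih₂
    refine ⟨.and C₁ C₂, max_le hC₁ hC₂, .andI h₁ h₂, (ProvesFrom.deduction ?_).proves⟩
    exact .mp (.mp (.thm i₁) ProvesFrom.head.andE₁) (.mp (.thm i₂) ProvesFrom.head.andE₂)
  | nec hu h => exact ⟨_, by simp [NNILc, rho], .nec hu h, .imp_self⟩

theorem Proves.substF_approx (hS : IsNNILApproxOp S) (hAxN : ∀ X, Ax X → NNILc X)
    (hAxS : ∀ σ X, Ax X → Ax (substF σ X)) {σ : ℕ → Form} (hσ : ∀ n, (σ n).rho = 0)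
    (hσσ : ∀ n, substF σ (σ n) = σ n) {X : Form} (hX : X.boxFree = true)
    (h : Proves Ax u (substF σ X)) : Proves Ax u (substF σ (S X)) := by
  obtain ⟨C, hCn, hC, hCX⟩ := exists_nnil_of_proves hAxN h
  set E := listConj ((List.range X.fvb).map fun n => iffF (.var n) (σ n))
  have hEn : NNILc E := rho_listConj_le (by simp [iffF, rho, hσ])
  have hEX : IPCbProves (.imp (.and C E) X) := by
    have hiff : ProvesFrom (fun _ => False) false [.and C E] (iffF (substF .var X) (substF σ X)) :=
      .substF_iff_of_boxFree hX fun n hn => .mp (.thm (.listConj_imp (List.mem_map.2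
        ⟨n, List.mem_range.2 (lt_fvb_of_mem_vars hn), rfl⟩))) ProvesFrom.head.andE₂
    rw [substF_var] at hiff
    exact (ProvesFrom.deduction (hiff.iff_mpr (.mp (.thm hCX) ProvesFrom.head.andE₁))).proves
  have hEσ : Proves Ax u (substF σ E) := by
    rw [substF_listConj]
    refine Proves.listConj_intro fun F hF => ?_
    obtain ⟨n, -, rfl⟩ := by simpa using hF
    simpa only [iffF, substF, hσσ] using Proves.iff_refl
  exact (Proves.of_ipcb (IPCbProves.subst σ ((hS X).2.2 (.and C E) (max_le hCn hEn) hEX))).mp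
    (.andI (hC.subst hAxS σ) hEσ)

theorem Proves.plusF_of_minusH (hS : IsNNILApproxOp S) (hSv : NoNewVars S)
    (hAxN : ∀ X, Ax X → NNILc X) (hAxS : ∀ σ X, Ax X → Ax (substF σ X)) {B : Form}
    (h : Proves Ax u (minusH S B)) : Proves Ax u (plusF S B) := by
  rw [← substF_plug_strip le_rfl] at h
  rw [plusF_eq]
  refine h.substF_approx hS hAxN hAxS (fun n => by unfold plug; split <;> rfl)
    (substF_plug_plug hSv fun E hE n hn => ?_) (boxFree_strip_fst B _)
  exact lt_fvb_of_mem_vars (mem_vars_of_mem_strip_snd hE hn)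

theorem Proves.map_minusH (hS : IsNNILApproxOp S) (hSv : NoNewVars S)
    (hAxN : ∀ X, Ax X → NNILc X) (hAxS : ∀ σ X, Ax X → Ax (substF σ X))
    (hMin : ∀ X, Ax X → Proves Ax u (minusH S X)) {B : Form} (h : Proves Ax u B) :
    Proves Ax u (minusH S B) := by
  induction h with
  | ax h => exact hMin _ h
  | ipc h => exact .ipc (by cases h <;> constructor)
  | mp _ _ ih₁ ih₂ => exact ih₁.mp ih₂
  | nec hu _ ih => exact .nec hu (ih.plusF_of_minusH hS hSv hAxN hAxS)

end Preservation

section Axioms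

variable {Ax : Form → Prop} {S : Form → Form}

theorem proves_minusH_k
    (hK : ProvesK Ax)
    (hS : IsNNILApproxOp S) (hSv : NoNewVars S) (A B : Form) :
    Proves Ax true (minusH S (.imp (.box (.imp A B)) (.imp (.box A) (.box B)))) :=
  (Proves.box_mono hK (.of_ipcb (plusF_imp hS hSv A B))).imp_trans (hK _ _)

theorem proves_minusH_four
    (hK : ProvesK Ax)
    (hS : IsNNILApproxOp S)
    (h4 : ∀ A, Proves Ax true (.imp (.box A) (.box (.box A)))) (A : Form) :
    Proves Ax true (minusH S (.imp (.box A) (.box (.box A)))) :=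
  (h4 _).imp_trans (Proves.box_mono hK (Proves.of_ipcb (plusF_box_iff hS A)).andE₂)

theorem proves_minusH_lob
    (hK : ProvesK Ax)
    (hS : IsNNILApproxOp S) (hSv : NoNewVars S)
    (hLob : ∀ A, Proves Ax true (.imp (.box (.imp (.box A) A)) (.box A))) (A : Form) :
    Proves Ax true (minusH S (.imp (.box (.imp (.box A) A)) (.box A))) := by
  have h : IPCbProves (.imp (plusF S (.imp (.box A) A)) (.imp (.box (plusF S A)) (plusF S A))) :=
    (ProvesFrom.deduction (ProvesFrom.deduction
      (.mp (.mp (.thm (plusF_imp hS hSv _ _)) (.hyp (List.mem_cons_of_mem _ List.mem_cons_self)))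
        (.mp (.thm (plusF_box_iff hS A).andE₂) .head)))).proves
  exact (Proves.box_mono hK (.of_ipcb h)).imp_trans (hLob _)

end Axioms

theorem Proves.map_plusF {Ax : Form → Prop} {star : Form → Form} (hstar : IsNNILApproxOp star)
    (hAxN : ∀ X, Ax X → NNILc X) (hAxS : ∀ σ X, Ax X → Ax (substF σ X))
    (hK : ProvesK Ax)
    (hMin : ∀ S, IsNNILApproxOp S → NoNewVars S → ∀ X, Ax X → Proves Ax true (minusH S X))
    {B : Form} (h : Proves Ax true B) : Proves Ax true (plusF star B) := by
  have hS := hstar.cleanup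
  have hSv : NoNewVars (cleanup star) := fun _ _ => mem_vars_of_mem_vars_cleanup
  exact (plusAux_iff_plusAux hK hS hstar _ B).iff_mp
    ((h.map_minusH hS hSv hAxN hAxS (hMin _ hS hSv)).plusF_of_minusH hS hSv hAxN hAxS)

theorem GLAx.nnil (X : Form) (h : GLAx X) : NNILc X := by
  cases h <;> simp [NNILc, rho]

theorem GLAx.substF (σ : ℕ → Form) (X : Form) (h : GLAx X) : GLAx (substF σ X) := by
  cases h <;> constructor

theorem GLAx.proves_minusH (S : Form → Form) (hS : IsNNILApproxOp S)
    (hSv : NoNewVars S) (X : Form) (h : GLAx X) : iGLProves (minusH S X) := by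
  have hK : ProvesK GLAx := fun A B => .ax (.k A B)
  cases h with
  | k A B => exact proves_minusH_k hK hS hSv A B
  | four A => exact proves_minusH_four hK hS (fun A => .ax (.four A)) A
  | lob A => exact proves_minusH_lob hK hS hSv (fun A => .ax (.lob A)) A

theorem K4Ax.nnil (X : Form) (h : K4Ax X) : NNILc X := by
  cases h <;> simp [NNILc, rho]

theorem K4Ax.substF (σ : ℕ → Form) (X : Form) (h : K4Ax X) : K4Ax (substF σ X) := by
  cases h <;> constructor

theorem K4Ax.proves_minusH (S : Form → Form) (hS : IsNNILApproxOp S)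
    (hSv : NoNewVars S) (X : Form) (h : K4Ax X) : iK4Proves (minusH S X) := by
  have hK : ProvesK K4Ax := fun A B => .ax (.k A B)
  cases h with
  | k A B => exact proves_minusH_k hK hS hSv A B
  | four A => exact proves_minusH_four hK hS (fun A => .ax (.four A)) A

/-- the TNNIL-algorithm preserves theorems of iGL and of iK4:
if iGL ⊢ B then iGL ⊢ B⁺, and if iK4 ⊢ B then iK4 ⊢ B⁺. -/
theorem plus_preserves_iGL_iK4 (star : Form → Form) (hstar : IsNNILApproxOp star) (B : Form) :
    (iGLProves B → iGLProves (plusF star B)) ∧ (iK4Proves B → iK4Proves (plusF star B)) :=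
  ⟨Proves.map_plusF hstar GLAx.nnil GLAx.substF (fun A B => .ax (.k A B)) GLAx.proves_minusH,
    Proves.map_plusF hstar K4Ax.nnil K4Ax.substF (fun A B => .ax (.k A B)) K4Ax.proves_minusH⟩

end PLHA
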